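/- Lemma B.2 (strict resource monotonicity for weakly MNW allocations): Fix a profile (f_1,…,f_n) of piecewise constant value density functions on [0,1], and let I be a positive-measure subset of a single interval X_t of the fixed partition on which all densities are constant, with f_1 strictly positive on I. Suppose A = (A_1,…,A_n) is a weakly MNW allocation on the cake [0,1] − I, and suppose f_1(I)/v_1(A_1) ≥ f_j(I)/v_j(A_j) for all agents j ∈ {1,…,n} (where f_i(I) denotes the constant value of f_i on I). Then there exists a weakly MNW allocation A⁺ on the cake [0,1] such that v_1(A_1) < v_1(A_1⁺) and v_i(A_i) ≤ v_i(A_i⁺) for all i ∈ {2,…,n}. -/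

import Mathlib

open MeasureTheory Set

noncomputable def cakeval (f : ℝ → ℝ) (S : Set ℝ) : ℝ := ∫ x in S, f x

def PiecewiseConstant (f : ℝ → ℝ) : Prop :=
  ∃ (m : ℕ) (a : Fin (m + 1) → ℝ) (c : Fin m → ℝ),
    a 0 = 0 ∧ a (Fin.last m) = 1 ∧ Monotone a ∧
    ∀ t : Fin m, ∀ x ∈ Set.Ico (a t.castSucc) (a t.succ), f x = c t

def ValidDensity (f : ℝ → ℝ) : Prop :=
  PiecewiseConstant f ∧ (∀ x, 0 ≤ f x) ∧ 0 < cakeval f (Set.Icc 0 1)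

def FinUnionIcc (S : Set ℝ) : Prop :=
  ∃ (k : ℕ) (a b : Fin k → ℝ), S = ⋃ j, Set.Icc (a j) (b j)

def IsAllocOn {n : ℕ} (C : Set ℝ) (A : Fin n → Set ℝ) : Prop :=
  (∀ i, A i ⊆ C) ∧ (∀ i, FinUnionIcc (A i)) ∧
    Pairwise fun i j => volume (A i ∩ A j) = 0

def IsAlloc {n : ℕ} (A : Fin n → Set ℝ) : Prop := IsAllocOn (Set.Icc 0 1) A

def CompleteAlloc {n : ℕ} (A : Fin n → Set ℝ) : Prop := (⋃ i, A i) = Set.Icc (0 : ℝ) 1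

noncomputable def nashProd {n : ℕ} (f : Fin n → ℝ → ℝ) (A : Fin n → Set ℝ) : ℝ :=
  ∏ i, cakeval (f i) (A i)

def IsMNWOn {n : ℕ} (C : Set ℝ) (f : Fin n → ℝ → ℝ) (A : Fin n → Set ℝ) : Prop :=
  IsAllocOn C A ∧ ∀ B : Fin n → Set ℝ, IsAllocOn C B → nashProd f B ≤ nashProd f A

def IsMNW {n : ℕ} (f : Fin n → ℝ → ℝ) (A : Fin n → Set ℝ) : Prop :=
  IsMNWOn (Set.Icc 0 1) f A

def IsCompleteMNW {n : ℕ} (f : Fin n → ℝ → ℝ) (A : Fin n → Set ℝ) : Prop :=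
  IsAlloc A ∧ CompleteAlloc A ∧
    ∀ B : Fin n → Set ℝ, IsAlloc B → CompleteAlloc B → nashProd f B ≤ nashProd f A

/-- A system of partition points `a 0 = 0 ≤ a 1 ≤ … ≤ a m = 1` of the cake `[0,1]`. -/
def IsPartitionPts (m : ℕ) (a : Fin (m + 1) → ℝ) : Prop :=
  a 0 = 0 ∧ a (Fin.last m) = 1 ∧ Monotone a

/-- The `t`-th cell of the partition given by the points `a`. -/
def cell {m : ℕ} (a : Fin (m + 1) → ℝ) (t : Fin m) : Set ℝ :=
  Set.Ico (a t.castSucc) (a t.succ)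

/-- All the densities `f i` are constant on each cell of the partition, with
constant value `F i t` on cell `t`. -/
def ConstOnCells {n m : ℕ} (f : Fin n → ℝ → ℝ) (a : Fin (m + 1) → ℝ)
    (F : Fin n → Fin m → ℝ) : Prop :=
  ∀ i t, ∀ x ∈ cell a t, f i x = F i t

/-- Weakly MNW allocation on the cake `C`: every agent gets positive value, and for
every cell `X_t` and every agent `i` whose piece meets `X_t` in positive measure,
`f_i(X_t)/v_i(A_i) ≥ f_j(X_t)/v_j(A_j)` for every agent `j` other than agent 1
(agent 1 being index `0`). -/
def WeaklyMNWOn {n m : ℕ} (C : Set ℝ) (f : Fin (n + 1) → ℝ → ℝ) (a : Fin (m + 1) → ℝ)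
    (F : Fin (n + 1) → Fin m → ℝ) (A : Fin (n + 1) → Set ℝ) : Prop :=
  IsAllocOn C A ∧ (∀ i, 0 < cakeval (f i) (A i)) ∧
    ∀ (t : Fin m) (i : Fin (n + 1)), 0 < volume (A i ∩ cell a t) →
      ∀ j : Fin (n + 1), j ≠ 0 →
        F j t / cakeval (f j) (A j) ≤ F i t / cakeval (f i) (A i)

/-!
Write `u i` for the value of agent `i` in `A`, and let agent `k ≠ 0` be *tight* with agent `i`
at a cell `X_s` that `i` holds (agent `0` counting as holding the cell `X_t` of `I`) when
`0 < f_k(X_s)` and `f_k(X_s) / u k = f_i(X_s) / u i`. Let `G` be the agents reachable from `0`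
along tight steps. Handing small amounts of cake along tight steps, agent `0` paying out of `I`,
raises the value of every agent of `G` other than `0` by the factor `1 + η`, that of agent `0`
by `1 + η / 2`, and changes nothing for the agents outside `G`. For `η` small the strict
inequalities of the weak MNW condition survive; an equality between an agent of `G` holding a
cell and an agent outside `G` valuing it would make the latter reachable, so none is broken.

Since the densities are constant on the cells, only the lengths of the pieces inside the cells
matter, and lengths fitting into every cell are realised by laying intervals side by side.
-/

namespace CakeCutting

open Finset Filter Topology Relation

section Discrete

variable {ι σ : Type*} [Fintype σ]

/-- Values of the agents for the allocation in which agent `i` receives length `y i s` of cell `s`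
of a partition on whose cells agent `i` has constant density `F i s`. -/
def value (F : ι → σ → ℝ) : (ι → σ → ℝ) →ₗ[ℝ] ι → ℝ where
  toFun y i := ∑ s, F i s * y i s
  map_add' y z := by ext i; simp [mul_add, sum_add_distrib]
  map_smul' c y := by ext i; simp [mul_sum, mul_left_comm]

lemma value_apply (F y : ι → σ → ℝ) (i : ι) : value F y i = ∑ s, F i s * y i s := rfl

lemma value_single [DecidableEq ι] [DecidableEq σ] (F : ι → σ → ℝ) (i : ι) (s : σ) (c : ℝ)
    (j : ι) : value F (Pi.single i (Pi.single s c)) j = if j = i then F i s * c else 0 := by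
  by_cases h : j = i
  · subst h; simp [value_apply, Pi.single_apply]
  · simp [value_apply, h]

lemma value_add_smul (F y E : ι → σ → ℝ) (η : ℝ) (i : ι) :
    value F (y + η • E) i = value F y i + η * value F E i := by
  simp

lemma exists_value_add_single_eq [DecidableEq ι] [DecidableEq σ] {F D : ι → σ → ℝ} {i₀ : ι}
    {t : σ} (hD : ∀ s, F i₀ s * D i₀ s ≤ 0) (hFt : 0 < F i₀ t) {c : ℝ} (hc : 0 < c) :
    ∃ g, 0 < D i₀ t + g ∧ value F (D + Pi.single i₀ (Pi.single t g)) i₀ = c := by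
  have hDt : value F D i₀ ≤ F i₀ t * D i₀ t := by
    rw [value_apply, ← add_sum_erase _ _ (mem_univ t)]
    linarith [sum_nonpos fun s (_ : s ∈ univ.erase t) ↦ hD s]
  refine ⟨(c - value F D i₀) / F i₀ t, pos_of_mul_pos_right ?_ hFt.le, ?_⟩
  · field_simp
    linarith
  · rw [map_add, Pi.add_apply, value_single, if_pos rfl]
    field_simp
    ring

def IsWeaklyMNW (i₀ : ι) (F y : ι → σ → ℝ) : Prop :=
  (∀ i, 0 < value F y i) ∧
    ∀ s i, 0 < y i s → ∀ j ≠ i₀, F j s / value F y j ≤ F i s / value F y i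

lemma div_le_div_of_rescale {Fi Fj ui uj Ui Uj η : ℝ} (hFi : 0 ≤ Fi) (hFj : 0 ≤ Fj)
    (hui : 0 < ui) (huj : 0 < uj) (hUi : 0 < Ui) (hUj : uj ≤ Uj) (hUi' : Ui ≤ (1 + η) * ui)
    (hle : Fj / uj ≤ Fi / ui) (hslack : Fj / uj < Fi / ui → (1 + η) * (Fj / uj) ≤ Fi / ui)
    (htight : Fj / uj = Fi / ui → 0 < Fj → Uj = (1 + η) * uj ∨ Ui = ui) :
    Fj / Uj ≤ Fi / Ui := by
  have hη : 0 < 1 + η := pos_of_mul_pos_left (hUi.trans_le hUi') hui.le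
  have hi : Fi / ui / (1 + η) ≤ Fi / Ui := by
    rw [div_div, mul_comm]; exact div_le_div_of_nonneg_left hFi hUi hUi'
  have hj : Fj / Uj ≤ Fj / uj := div_le_div_of_nonneg_left hFj huj hUj
  obtain hFj0 | hFjpos := hFj.eq_or_lt
  · rw [← hFj0, zero_div]; positivity
  obtain hlt | heq := hle.lt_or_eq
  · refine hj.trans (le_trans ?_ hi)
    rw [le_div_iff₀ hη, mul_comm]; exact hslack hlt
  obtain hUj | hUi := htight heq hFjpos
  · rwa [hUj, mul_comm, ← div_div, heq]
  · rwa [hUi, ← heq]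

lemma eventually_add_mul_le {c d e : ℝ} (h : c < e ∨ c ≤ e ∧ d ≤ 0) :
    ∀ᶠ η in 𝓝[>] (0 : ℝ), c + η * d ≤ e := by
  obtain h | ⟨h, hd⟩ := h
  · have : ∀ᶠ η in 𝓝 (0 : ℝ), c + η * d < e :=
      ContinuousAt.eventually_lt (f := fun η ↦ c + η * d) (by fun_prop) (by fun_prop) (by simpa)
    exact (eventually_nhdsWithin_of_eventually_nhds this).mono fun _ ↦ le_of_lt
  · filter_upwards [self_mem_nhdsWithin] with η (hη : 0 < η)
    nlinarith

/-- Moving the allocation `y` a little in the direction `E` keeps it within the cell lengths `ℓ`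
and weakly MNW. -/
structure IsMNWDirection [Fintype ι] (i₀ : ι) (ℓ : σ → ℝ) (F y E : ι → σ → ℝ) : Prop where
  sum_nonpos_or_lt : ∀ s, ∑ i, E i s ≤ 0 ∨ ∑ i, y i s < ℓ s
  pos_of_neg : ∀ i s, E i s < 0 → 0 < y i s
  value_mem_Icc : ∀ i, value F E i ∈ Set.Icc 0 (value F y i)
  div_le_div : ∀ i s, 0 < y i s ∨ 0 < E i s → ∀ j ≠ i₀,
    F j s / value F y j ≤ F i s / value F y i ∧
      (F j s / value F y j = F i s / value F y i → 0 < F j s →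
        value F E j = value F y j ∨ value F E i = 0)

namespace IsMNWDirection

variable [Fintype ι] {i₀ : ι} {ℓ : σ → ℝ} {F y E : ι → σ → ℝ}

lemma eventually (hE : IsMNWDirection i₀ ℓ F y E) (hy : 0 ≤ y)
    (hcap : ∀ s, ∑ i, y i s ≤ ℓ s) :
    ∀ᶠ η in 𝓝[>] 0, (∀ i s, 0 ≤ y i s + η * E i s) ∧ (∀ s, ∑ i, (y i s + η * E i s) ≤ ℓ s) ∧
      ∀ i j s, F j s / value F y j < F i s / value F y i →
        (1 + η) * (F j s / value F y j) ≤ F i s / value F y i := by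
  refine .and ?_ (.and ?_ ?_) <;> simp only [eventually_all]
  · intro i s
    have h : -y i s < 0 ∨ -y i s ≤ 0 ∧ -E i s ≤ 0 := by
      by_cases hEis : E i s < 0
      · exact .inl (neg_neg_of_pos (hE.pos_of_neg i s hEis))
      · exact .inr ⟨neg_nonpos.2 (hy i s), by linarith⟩
    filter_upwards [eventually_add_mul_le h] with η hη
    linarith
  · simp only [sum_add_distrib, ← mul_sum]
    exact fun s ↦ eventually_add_mul_le ((hE.sum_nonpos_or_lt s).symm.imp id fun h ↦ ⟨hcap s, h⟩)
  · intro i j s h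
    filter_upwards [eventually_add_mul_le (d := F j s / value F y j) (.inl h)] with η hη
    linarith

lemma isWeaklyMNW_add_smul (hE : IsMNWDirection i₀ ℓ F y E) (hF : ∀ j s, 0 < ℓ s → 0 ≤ F j s)
    (hu : ∀ i, 0 < value F y i) {η : ℝ} (hη : 0 < η) (hY : ∀ i s, 0 ≤ y i s + η * E i s)
    (hYcap : ∀ s, ∑ i, (y i s + η * E i s) ≤ ℓ s)
    (hslack : ∀ i j s, F j s / value F y j < F i s / value F y i →
      (1 + η) * (F j s / value F y j) ≤ F i s / value F y i) :
    IsWeaklyMNW i₀ F (y + η • E) := by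
  have hw₀ i : 0 ≤ η * value F E i := mul_nonneg hη.le (hE.value_mem_Icc i).1
  have hw₁ i : η * value F E i ≤ η * value F y i :=
    mul_le_mul_of_nonneg_left (hE.value_mem_Icc i).2 hη.le
  refine ⟨fun i ↦ ?_, fun s i hi j hj ↦ ?_⟩ <;> simp only [value_add_smul]
  · linarith [hu i, hw₀ i]
  simp only [Pi.add_apply, Pi.smul_apply, smul_eq_mul] at hi
  have hocc : 0 < y i s ∨ 0 < E i s := by
    by_contra! h
    nlinarith
  have hℓ : 0 < ℓ s := hi.trans_le ((single_le_sum (fun k _ ↦ hY k s) (mem_univ i)).trans (hYcap s))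
  obtain ⟨hle, htight⟩ := hE.div_le_div i s hocc j hj
  refine div_le_div_of_rescale (hF i s hℓ) (hF j s hℓ) (hu i) (hu j) ?_ ?_ ?_ hle
    (hslack i j s) fun h h' ↦ (htight h h').imp (fun h ↦ by rw [h]; ring) fun h ↦ by simp [h]
  · linarith [hu i, hw₀ i]
  · linarith [hw₀ j]
  · linarith [hw₁ i]

theorem exists_pos_isWeaklyMNW_add_smul (hE : IsMNWDirection i₀ ℓ F y E) (hy : 0 ≤ y)
    (hcap : ∀ s, ∑ i, y i s ≤ ℓ s) (hF : ∀ j s, 0 < ℓ s → 0 ≤ F j s)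
    (hu : ∀ i, 0 < value F y i) :
    ∃ η : ℝ, 0 < η ∧ 0 ≤ y + η • E ∧ (∀ s, ∑ i, (y + η • E) i s ≤ ℓ s) ∧
      IsWeaklyMNW i₀ F (y + η • E) := by
  obtain ⟨η, hη, hY, hYcap, hslack⟩ :=
    (eventually_mem_nhdsWithin.and (hE.eventually hy hcap)).exists
  exact ⟨η, hη, fun i s ↦ hY i s, hYcap, hE.isWeaklyMNW_add_smul hF hu hη hY hYcap hslack⟩

end IsMNWDirection

end Discrete

section Transfer

variable {ι σ : Type*} [Fintype ι] {edge : ι → ι → σ → Prop} {i₀ : ι}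

def Reaches (edge : ι → ι → σ → Prop) (i₀ k : ι) : Prop :=
  ReflTransGen (fun i k ↦ ∃ s, edge i k s) i₀ k

/-- `D i s` is the net length of cell `s` that agent `i` gains when agents hand over parts of
the cells `s` along `edge i k s`; receivers are served by agents reachable from `i₀`. -/
structure IsTransfer (edge : ι → ι → σ → Prop) (i₀ : ι) (D : ι → σ → ℝ) : Prop where
  sum_eq_zero : ∀ s, ∑ i, D i s = 0
  exists_edge_of_neg : ∀ i s, D i s < 0 → ∃ k, edge i k s
  exists_edge_of_pos : ∀ k s, 0 < D k s → ∃ i, Reaches edge i₀ i ∧ edge i k s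

namespace IsTransfer

lemma zero : IsTransfer edge i₀ 0 where
  sum_eq_zero _ := by simp
  exists_edge_of_neg _ _ h := by simp at h
  exists_edge_of_pos _ _ h := by simp at h

lemma add {D₁ D₂ : ι → σ → ℝ} (h₁ : IsTransfer edge i₀ D₁) (h₂ : IsTransfer edge i₀ D₂) :
    IsTransfer edge i₀ (D₁ + D₂) where
  sum_eq_zero s := by simp [sum_add_distrib, h₁.sum_eq_zero, h₂.sum_eq_zero]
  exists_edge_of_neg i s h := by
    by_cases h' : D₁ i s < 0
    · exact h₁.exists_edge_of_neg i s h'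
    · exact h₂.exists_edge_of_neg i s (by simp only [Pi.add_apply] at h; linarith)
  exists_edge_of_pos k s h := by
    by_cases h' : 0 < D₁ k s
    · exact h₁.exists_edge_of_pos k s h'
    · exact h₂.exists_edge_of_pos k s (by simp only [Pi.add_apply] at h; linarith)

lemma sum {κ : Type*} (S : Finset κ) {D : κ → ι → σ → ℝ}
    (h : ∀ k ∈ S, IsTransfer edge i₀ (D k)) : IsTransfer edge i₀ (∑ k ∈ S, D k) :=
  Finset.sum_induction _ _ (fun _ _ ↦ add) zero h

lemma single [DecidableEq ι] [DecidableEq σ] {i k : ι} {s : σ} {d : ℝ}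
    (hi : Reaches edge i₀ i) (he : edge i k s) (hd : 0 ≤ d) :
    IsTransfer edge i₀ (Pi.single k (Pi.single s d) - Pi.single i (Pi.single s d)) where
  sum_eq_zero s' := by simp [sum_sub_distrib, Pi.single_apply, ite_apply]
  exists_edge_of_neg j s' h := by
    simp only [Pi.sub_apply, sub_neg, Pi.single_apply, ite_apply, Pi.zero_apply] at h
    split_ifs at h <;> first | linarith | (subst_vars; exact ⟨k, he⟩)
  exists_edge_of_pos j s' h := by
    simp only [Pi.sub_apply, sub_pos, Pi.single_apply, ite_apply, Pi.zero_apply] at h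
    split_ifs at h <;> first | linarith | (subst_vars; exact ⟨i, hi, he⟩)

lemma mul_nonpos {D F : ι → σ → ℝ}
    (hD : IsTransfer edge i₀ D) (hin : ∀ i s, ¬ edge i i₀ s)
    (hnonneg : ∀ i k s, edge i k s → 0 ≤ F i s) (s : σ) : F i₀ s * D i₀ s ≤ 0 := by
  have hle : D i₀ s ≤ 0 := not_lt.1 fun h ↦ by
    obtain ⟨i, -, he⟩ := hD.exists_edge_of_pos i₀ s h
    exact hin i s he
  obtain hneg | hzero := hle.lt_or_eq
  · obtain ⟨k, he⟩ := hD.exists_edge_of_neg i₀ s hneg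
    exact mul_nonpos_of_nonneg_of_nonpos (hnonneg _ _ _ he) hle
  · simp [hzero]

end IsTransfer

variable [Fintype σ] [DecidableEq ι] [DecidableEq σ] {F : ι → σ → ℝ}

theorem exists_isTransfer_value_eq_single (hpos : ∀ i k s, edge i k s → 0 < F k s)
    (hnonneg : ∀ i k s, edge i k s → 0 ≤ F i s) {k : ι} (hk : Reaches edge i₀ k) {c : ℝ}
    (hc : 0 ≤ c) :
    ∃ D, IsTransfer edge i₀ D ∧ ∀ j ≠ i₀, value F D j = (Pi.single k c : ι → ℝ) j := by
  induction hk generalizing c with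
  | refl => exact ⟨0, .zero, fun j hj ↦ by simp [hj]⟩
  | @tail i k hi hik ih =>
    -- `i` hands `k` the length `c / F k s` of cell `s`, and is refunded the value it loses
    obtain ⟨s, he⟩ := hik
    have hFk := hpos _ _ _ he
    set d := c / F k s
    obtain ⟨D, hD, hDv⟩ := ih (mul_nonneg (hnonneg _ _ _ he) (div_nonneg hc hFk.le))
    refine ⟨D + (Pi.single k (Pi.single s d) - Pi.single i (Pi.single s d)),
      hD.add (.single hi he (div_nonneg hc hFk.le)), fun j hj ↦ ?_⟩
    rw [map_add, Pi.add_apply, hDv j hj]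
    simp only [value_apply, Pi.sub_apply, Pi.single_apply, ite_apply, Pi.zero_apply]
    split_ifs <;> subst_vars <;> simp [d, mul_div_cancel₀ _ hFk.ne']

theorem exists_isTransfer_value_eq (hpos : ∀ i k s, edge i k s → 0 < F k s)
    (hnonneg : ∀ i k s, edge i k s → 0 ≤ F i s) {b : ι → ℝ} (hb : ∀ k, 0 ≤ b k)
    (hbr : ∀ k, b k ≠ 0 → Reaches edge i₀ k) :
    ∃ D, IsTransfer edge i₀ D ∧ ∀ j ≠ i₀, value F D j = b j := by
  have : ∀ k, ∃ D, IsTransfer edge i₀ D ∧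
      ∀ j ≠ i₀, value F D j = (Pi.single k (b k) : ι → ℝ) j := by
    intro k
    by_cases h : b k = 0
    · exact ⟨0, .zero, fun j _ ↦ by simp [h]⟩
    · exact exists_isTransfer_value_eq_single hpos hnonneg (hbr k h) (hb k)
  choose D hD hDv using this
  refine ⟨∑ k, D k, .sum _ fun k _ ↦ hD k, fun j hj ↦ ?_⟩
  simp [map_sum, hDv _ j hj]

end Transfer

section Improvement

variable {ι σ : Type*} [Fintype ι] [Fintype σ] {i₀ : ι} {t : σ} {F y : ι → σ → ℝ}

/-- Agent `i` holds part of cell `s` (agent `i₀` also counts as holding the cell `t` of the new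
piece), and agent `k ≠ i₀` values `s` with the same ratio `F · s / value F y ·` as `i`. -/
def TightEdge (i₀ : ι) (t : σ) (F y : ι → σ → ℝ) (i k : ι) (s : σ) : Prop :=
  (0 < y i s ∨ i = i₀ ∧ s = t) ∧ k ≠ i₀ ∧ 0 < F k s ∧
    F k s / value F y k = F i s / value F y i

lemma exists_isTransfer_tightEdge
    (hF : ∀ i s, (0 < y i s ∨ i = i₀ ∧ s = t) → ∀ j, 0 ≤ F j s) (hu : ∀ i, 0 < value F y i) :
    ∃ D, IsTransfer (TightEdge i₀ t F y) i₀ D ∧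
      (∀ j ≠ i₀, Reaches (TightEdge i₀ t F y) i₀ j → value F D j = value F y j) ∧
      (∀ j ≠ i₀, ¬ Reaches (TightEdge i₀ t F y) i₀ j → value F D j = 0) ∧
      ∀ s, F i₀ s * D i₀ s ≤ 0 := by
  classical
  have hnonneg : ∀ i k s, TightEdge i₀ t F y i k s → 0 ≤ F i s := fun i _ s h ↦ hF i s h.1 i
  obtain ⟨D, hD, hDv⟩ := exists_isTransfer_value_eq (fun _ _ _ h ↦ h.2.2.1) hnonneg
    (b := fun k ↦ if Reaches (TightEdge i₀ t F y) i₀ k then value F y k else 0)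
    (fun k ↦ by split_ifs <;> simp [(hu k).le]) (fun k hk ↦ by_contra fun h ↦ hk (if_neg h))
  exact ⟨D, hD, fun j hj hG ↦ (hDv j hj).trans (if_pos hG),
    fun j hj hG ↦ (hDv j hj).trans (if_neg hG), hD.mul_nonpos (fun i s h ↦ h.2.1 rfl) hnonneg⟩

/-- After the transfer, every agent holding part of a cell is still one of the agents of highest
ratio there, and ties with it propagate reachability from `i₀`. -/
lemma IsTransfer.div_le_div_of_tightEdge (hmnw : IsWeaklyMNW i₀ F y)
    (hdeserve : ∀ j, F j t / value F y j ≤ F i₀ t / value F y i₀) {D : ι → σ → ℝ}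
    (hD : IsTransfer (TightEdge i₀ t F y) i₀ D) {i : ι} {s : σ}
    (h : (0 < y i s ∨ i = i₀ ∧ s = t) ∨ 0 < D i s) {j : ι} (hj : j ≠ i₀) :
    F j s / value F y j ≤ F i s / value F y i ∧
      (F j s / value F y j = F i s / value F y i → 0 < F j s →
        Reaches (TightEdge i₀ t F y) i₀ i → Reaches (TightEdge i₀ t F y) i₀ j) := by
  obtain ⟨i', hi', hR, hG⟩ : ∃ i', (0 < y i' s ∨ i' = i₀ ∧ s = t) ∧
      F i' s / value F y i' = F i s / value F y i ∧
      (Reaches (TightEdge i₀ t F y) i₀ i → Reaches (TightEdge i₀ t F y) i₀ i') := by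
    rcases h with h | h
    · exact ⟨i, h, rfl, id⟩
    · obtain ⟨i', hG', he⟩ := hD.exists_edge_of_pos i s h
      exact ⟨i', he.1, he.2.2.2.symm, fun _ ↦ hG'⟩
  have hle : F j s / value F y j ≤ F i' s / value F y i' := by
    rcases hi' with hi' | ⟨rfl, rfl⟩
    exacts [hmnw.2 s i' hi' j hj, hdeserve j]
  exact ⟨hR ▸ hle, fun hRj hFj hGi ↦
    ReflTransGen.tail (hG hGi) ⟨s, hi', hj, hFj, hRj.trans hR.symm⟩⟩

theorem exists_isMNWDirection {ℓ : σ → ℝ} (hroom : ∑ i, y i t < ℓ t)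
    (hF : ∀ i s, (0 < y i s ∨ i = i₀ ∧ s = t) → ∀ j, 0 ≤ F j s) (hmnw : IsWeaklyMNW i₀ F y)
    (hFt : 0 < F i₀ t) (hdeserve : ∀ j, F j t / value F y j ≤ F i₀ t / value F y i₀) :
    ∃ E, IsMNWDirection i₀ ℓ F y E ∧ 0 < value F E i₀ := by
  classical
  set u := value F y
  have hu : ∀ i, 0 < u i := hmnw.1
  obtain ⟨D, hD, hDG, hDG', hD₀⟩ := exists_isTransfer_tightEdge hF hu
  -- agent `i₀` pays for its part of the transfers, and gains `u i₀ / 2`, out of the new piece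
  obtain ⟨g, hE₀, hE₀v⟩ := exists_value_add_single_eq hD₀ hFt (half_pos (hu i₀))
  set E := D + Pi.single i₀ (Pi.single t g)
  have hED : ∀ i s, ¬(i = i₀ ∧ s = t) → E i s = D i s := fun i s h ↦ by
    simp only [E, Pi.add_apply, Pi.single_apply, ite_apply, Pi.zero_apply]
    split_ifs <;> simp_all
  have hEv : ∀ j ≠ i₀, value F E j = value F D j := fun j hj ↦ by
    rw [map_add, Pi.add_apply, value_single, if_neg hj, add_zero]
  refine ⟨E, ⟨fun s ↦ ?_, fun i s h ↦ ?_, fun i ↦ ?_, fun i s h j hj ↦ ?_⟩, hE₀v ▸ half_pos (hu i₀)⟩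
  · by_cases hs : s = t
    · exact .inr (hs ▸ hroom)
    · exact .inl (by rw [sum_congr rfl fun i _ ↦ hED i s fun h ↦ hs h.2, hD.sum_eq_zero])
  · by_cases his : i = i₀ ∧ s = t
    · obtain ⟨rfl, rfl⟩ := his
      simp only [E, Pi.add_apply, Pi.single_eq_same] at h
      linarith
    · rw [hED i s his] at h
      obtain ⟨k, hk⟩ := hD.exists_edge_of_neg i s h
      exact hk.1.resolve_right his
  · by_cases hi : i = i₀
    · subst hi; rw [hE₀v]; constructor <;> linarith [hu i]
    by_cases hG : Reaches (TightEdge i₀ t F y) i₀ i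
    · rw [hEv i hi, hDG i hi hG]; exact ⟨(hu i).le, le_rfl⟩
    · rw [hEv i hi, hDG' i hi hG]; exact ⟨le_rfl, (hu i).le⟩
  · have h' : (0 < y i s ∨ i = i₀ ∧ s = t) ∨ 0 < D i s := by
      by_cases his : i = i₀ ∧ s = t
      · exact .inl (.inr his)
      · exact h.imp .inl fun h ↦ hED i s his ▸ h
    obtain ⟨hle, htight⟩ := hD.div_le_div_of_tightEdge hmnw hdeserve h' hj
    refine ⟨hle, fun hR hFj ↦ ?_⟩
    by_cases hG : Reaches (TightEdge i₀ t F y) i₀ i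
    · exact .inl ((hEv j hj).trans (hDG j hj (htight hR hFj hG)))
    · have hi : i ≠ i₀ := by rintro rfl; exact hG .refl
      exact .inr ((hEv i hi).trans (hDG' i hi hG))

theorem exists_isWeaklyMNW_improvement {ℓ : σ → ℝ}
    (hy : 0 ≤ y) (hcap : ∀ s, ∑ i, y i s ≤ ℓ s) (hroom : ∑ i, y i t < ℓ t)
    (hF : ∀ j s, 0 < ℓ s → 0 ≤ F j s) (hmnw : IsWeaklyMNW i₀ F y) (hFt : 0 < F i₀ t)
    (hdeserve : ∀ j, F j t / value F y j ≤ F i₀ t / value F y i₀) :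
    ∃ Y, 0 ≤ Y ∧ (∀ s, ∑ i, Y i s ≤ ℓ s) ∧ IsWeaklyMNW i₀ F Y ∧
      value F y i₀ < value F Y i₀ ∧ ∀ i, value F y i ≤ value F Y i := by
  have hℓ : ∀ i s, (0 < y i s ∨ i = i₀ ∧ s = t) → 0 < ℓ s := by
    rintro i s (h | ⟨rfl, rfl⟩)
    · exact h.trans_le ((single_le_sum (fun k _ ↦ hy k s) (mem_univ i)).trans (hcap s))
    · linarith [Fintype.sum_nonneg (f := fun k ↦ y k s) fun k ↦ hy k s]
  obtain ⟨E, hE, hE₀⟩ :=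
    exists_isMNWDirection hroom (fun i s h j ↦ hF j s (hℓ i s h)) hmnw hFt hdeserve
  obtain ⟨η, hη, hY, hYcap, hYmnw⟩ := hE.exists_pos_isWeaklyMNW_add_smul hy hcap hF hmnw.1
  refine ⟨y + η • E, hY, hYcap, hYmnw, ?_, fun i ↦ ?_⟩ <;> rw [value_add_smul]
  · nlinarith
  · nlinarith [(hE.value_mem_Icc i).1]

end Improvement

section Cells

variable {m : ℕ} {a : Fin (m + 1) → ℝ}

lemma cell_disjoint (ha : Monotone a) : Pairwise fun s s' ↦ Disjoint (cell a s) (cell a s') := by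
  intro s s' h
  wlog hlt : s < s' generalizing s s'
  · exact (this h.symm ((Ne.symm h).lt_of_le (not_lt.1 hlt))).symm
  exact Set.disjoint_left.2 fun x hx hx' ↦
    (hx.2.trans_le ((ha (Fin.succ_le_castSucc_iff.2 hlt)).trans hx'.1)).false

lemma Ico_subset_iUnion_cell (ha : Monotone a) :
    Set.Ico (a 0) (a (Fin.last m)) ⊆ ⋃ s, cell a s := by
  induction m with
  | zero => exact fun x hx ↦ absurd hx.2 (not_lt.2 hx.1)
  | succ m ih =>
    intro x hx
    by_cases h : x < a (Fin.last m).castSucc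
    · obtain ⟨s, hs⟩ := Set.mem_iUnion.1
        (ih (a := a ∘ Fin.castSucc) (ha.comp Fin.strictMono_castSucc.monotone) ⟨hx.1, h⟩)
      exact Set.mem_iUnion.2 ⟨s.castSucc, by rw [cell, Fin.succ_castSucc]; exact hs⟩
    · exact Set.mem_iUnion.2 ⟨Fin.last m, not_lt.1 h, by simpa using hx.2⟩

lemma volume_real_cell (ha : Monotone a) (s : Fin m) :
    volume.real (cell a s) = a s.succ - a s.castSucc :=
  Real.volume_real_Ico_of_le (ha Fin.castSucc_lt_succ.le)

lemma volume_cell_ne_top (s : Fin m) : volume (cell a s) ≠ ⊤ := measure_Ico_lt_top.ne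

lemma volume_Icc_inter_Icc_of_le {x y z w : ℝ} (h : y ≤ z) :
    volume (Set.Icc x y ∩ Set.Icc z w) = 0 := by
  rw [Set.Icc_inter_Icc, Real.volume_Icc, ENNReal.ofReal_eq_zero]
  exact (sub_le_sub (min_le_left _ _) (le_max_right _ _)).trans (by linarith)

lemma volume_Icc_cell_inter_Icc_cell (ha : Monotone a) {s s' : Fin m} (h : s ≠ s') :
    volume (Set.Icc (a s.castSucc) (a s.succ) ∩ Set.Icc (a s'.castSucc) (a s'.succ)) = 0 := by
  wlog hlt : s < s' generalizing s s'
  · rw [Set.inter_comm]; exact this h.symm ((Ne.symm h).lt_of_le (not_lt.1 hlt))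
  exact volume_Icc_inter_Icc_of_le (ha (Fin.succ_le_castSucc_iff.2 hlt))

theorem cakeval_eq_sum (ha : IsPartitionPts m a) {f : ℝ → ℝ} {c : Fin m → ℝ}
    (hf : ∀ s, ∀ x ∈ cell a s, f x = c s) {S : Set ℝ} (hS : MeasurableSet S)
    (hS1 : S ⊆ Set.Icc 0 1) :
    cakeval f S = ∑ s, c s * volume.real (S ∩ cell a s) := by
  obtain ⟨h0, h1, ha⟩ := ha
  have hae : f =ᵐ[volume.restrict S] fun x ↦ ∑ s, (cell a s).indicator (fun _ ↦ c s) x := by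
    rw [EventuallyEq, ae_restrict_iff' hS]
    filter_upwards [volume.ae_ne 1] with x hx1 hxS
    obtain ⟨s, hs⟩ := Set.mem_iUnion.1 (Ico_subset_iUnion_cell ha
      (by rw [h0, h1]; exact ⟨(hS1 hxS).1, (hS1 hxS).2.lt_of_ne hx1⟩))
    rw [hf s x hs, sum_eq_single s (fun s' _ hs' ↦ Set.indicator_of_notMem
      (Set.disjoint_left.1 (cell_disjoint ha hs'.symm) hs) _) (by simp),
      Set.indicator_of_mem hs]
  rw [cakeval, integral_congr_ae hae, integral_finsetSum _ fun s _ ↦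
    (integrable_indicator_iff measurableSet_Ico).2 (integrableOn_const
      (ne_top_of_le_ne_top (volume_cell_ne_top s) (Measure.restrict_apply_le _ _)))]
  refine sum_congr rfl fun s _ ↦ ?_
  have hs : MeasurableSet (cell a s) := measurableSet_Ico
  rw [integral_indicator_const _ hs, measureReal_restrict_apply hs,
    smul_eq_mul, mul_comm, Set.inter_comm]

end Cells

section Stacking

variable {m N : ℕ} {a : Fin (m + 1) → ℝ} {Y : Fin N → Fin m → ℝ}

/-- The lower end of agent `i`'s piece when the lengths `Y · s` are laid side by side, in the
order of the agents, from the left end of cell `s`. -/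
def stackLo (a : Fin (m + 1) → ℝ) (Y : Fin N → Fin m → ℝ) (i : Fin N) (s : Fin m) : ℝ :=
  a s.castSucc + ∑ i' ∈ Iio i, Y i' s

def stackPiece (a : Fin (m + 1) → ℝ) (Y : Fin N → Fin m → ℝ) (i : Fin N) (s : Fin m) : Set ℝ :=
  Set.Icc (stackLo a Y i s) (stackLo a Y i s + Y i s)

lemma stackLo_add_eq (i : Fin N) (s : Fin m) :
    stackLo a Y i s + Y i s = a s.castSucc + ∑ i' ∈ Iic i, Y i' s := by
  rw [stackLo, ← sum_Iio_add_eq_sum_Iic, add_assoc]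

lemma stackLo_add_le_stackLo (hY : 0 ≤ Y) {i i' : Fin N} (h : i < i') (s : Fin m) :
    stackLo a Y i s + Y i s ≤ stackLo a Y i' s := by
  rw [stackLo_add_eq, stackLo]
  gcongr
  · exact fun j _ _ ↦ hY j s
  · exact fun j hj ↦ mem_Iio.2 ((mem_Iic.1 hj).trans_lt h)

lemma stackPiece_subset (hY : 0 ≤ Y) (hcap : ∀ s, ∑ i, Y i s ≤ a s.succ - a s.castSucc)
    (i : Fin N) (s : Fin m) : stackPiece a Y i s ⊆ Set.Icc (a s.castSucc) (a s.succ) := by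
  refine Set.Icc_subset_Icc (le_add_of_nonneg_right (sum_nonneg fun j _ ↦ hY j s)) ?_
  rw [stackLo_add_eq]
  linarith [hcap s, sum_le_sum_of_subset_of_nonneg (subset_univ (Iic i)) fun j _ _ ↦ hY j s]

lemma volume_stackPiece_inter_stackPiece (ha : Monotone a) (hY : 0 ≤ Y)
    (hcap : ∀ s, ∑ i, Y i s ≤ a s.succ - a s.castSucc) {i i' : Fin N} {s s' : Fin m}
    (h : (i, s) ≠ (i', s')) : volume (stackPiece a Y i s ∩ stackPiece a Y i' s') = 0 := by
  by_cases hs : s = s'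
  · subst hs
    have hi : i ≠ i' := fun hi ↦ h (by rw [hi])
    clear h
    wlog hlt : i < i' generalizing i i'
    · rw [Set.inter_comm]; exact this hi.symm (hi.symm.lt_of_le (not_lt.1 hlt))
    exact volume_Icc_inter_Icc_of_le (stackLo_add_le_stackLo hY hlt s)
  · exact measure_mono_null (Set.inter_subset_inter (stackPiece_subset hY hcap i s)
      (stackPiece_subset hY hcap i' s')) (volume_Icc_cell_inter_Icc_cell ha hs)

lemma volume_real_iUnion_stackPiece_inter_cell (ha : Monotone a) (hY : 0 ≤ Y)
    (hcap : ∀ s, ∑ i, Y i s ≤ a s.succ - a s.castSucc) (i : Fin N) (s : Fin m) :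
    volume.real ((⋃ s', stackPiece a Y i s') ∩ cell a s) = Y i s := by
  have hsub := stackPiece_subset hY hcap i
  have hae : ((⋃ s', stackPiece a Y i s') ∩ cell a s : Set ℝ) =ᵐ[volume] stackPiece a Y i s := by
    refine ae_eq_set.2 ⟨measure_mono_null (t := ⋃ s', (stackPiece a Y i s' \ stackPiece a Y i s) ∩
      cell a s) ?_ (measure_iUnion_null fun s' ↦ ?_), measure_mono_null (t := {a s.succ}) ?_
      (measure_singleton _)⟩
    · rintro x ⟨⟨hx, hc⟩, hn⟩
      obtain ⟨s', hs'⟩ := Set.mem_iUnion.1 hx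
      exact Set.mem_iUnion.2 ⟨s', ⟨hs', hn⟩, hc⟩
    · by_cases h : s' = s
      · simp [h]
      · exact measure_mono_null (Set.inter_subset_inter (Set.sdiff_subset.trans (hsub s'))
          Set.Ico_subset_Icc_self) (volume_Icc_cell_inter_Icc_cell ha h)
    · rintro x ⟨hx, hn⟩
      have hx' := hsub s hx
      exact le_antisymm hx'.2 (not_lt.1 fun hlt ↦ hn ⟨Set.mem_iUnion.2 ⟨s, hx⟩, hx'.1, hlt⟩)
  rw [measureReal_congr hae, stackPiece,
    Real.volume_real_Icc_of_le (le_add_of_nonneg_right (hY i s))]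
  ring

end Stacking

section Allocations

variable {n m : ℕ} {a : Fin (m + 1) → ℝ} {C : Set ℝ}

lemma _root_.FinUnionIcc.measurableSet {S : Set ℝ} (h : FinUnionIcc S) : MeasurableSet S := by
  obtain ⟨k, c, d, rfl⟩ := h
  exact MeasurableSet.iUnion fun _ ↦ measurableSet_Icc

noncomputable def cellLengths (a : Fin (m + 1) → ℝ) (A : Fin n → Set ℝ) (i : Fin n) (s : Fin m) :
    ℝ :=
  volume.real (A i ∩ cell a s)

lemma _root_.IsAllocOn.sum_volume_real_inter_le {A : Fin n → Set ℝ} (hA : IsAllocOn C A) {T : Set ℝ}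
    (hTm : MeasurableSet T) (hT : volume T ≠ ⊤) :
    ∑ i, volume.real (A i ∩ T) ≤ volume.real (C ∩ T) := by
  have hfin : ∀ i, volume (A i ∩ T) ≠ ⊤ :=
    fun i ↦ measure_ne_top_of_subset Set.inter_subset_right hT
  rw [← measureReal_biUnion_finset₀ (s := univ) ?_
    (fun i _ ↦ ((FinUnionIcc.measurableSet (hA.2.1 i)).inter hTm).nullMeasurableSet)
    fun i _ ↦ hfin i]
  · simp only [Finset.mem_univ, Set.iUnion_true]
    exact measureReal_mono (Set.iUnion_subset fun i ↦ Set.inter_subset_inter_left _ (hA.1 i))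
      (measure_ne_top_of_subset Set.inter_subset_right hT)
  · intro i _ j _ hij
    exact measure_mono_null (Set.inter_subset_inter Set.inter_subset_left Set.inter_subset_left)
      (hA.2.2 hij)

lemma _root_.IsAllocOn.sum_cellLengths_le {A : Fin n → Set ℝ} (hA : IsAllocOn C A) (ha : Monotone a)
    (s : Fin m) : ∑ i, cellLengths a A i s ≤ a s.succ - a s.castSucc :=
  (hA.sum_volume_real_inter_le (T := cell a s) measurableSet_Ico (volume_cell_ne_top s)).trans
    ((measureReal_mono Set.inter_subset_right (volume_cell_ne_top s)).trans
      (volume_real_cell ha s).le)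

lemma _root_.IsAllocOn.sum_cellLengths_add_le {A : Fin n → Set ℝ} {I : Set ℝ}
    (hA : IsAllocOn (C \ I) A) (ha : Monotone a) {t : Fin m} (hI : MeasurableSet I)
    (hIt : I ⊆ cell a t) :
    ∑ i, cellLengths a A i t + volume.real I ≤ a t.succ - a t.castSucc := by
  have hsub : (C \ I) ∩ cell a t ⊆ cell a t \ I := fun x hx ↦ ⟨hx.2, hx.1.2⟩
  have := (hA.sum_volume_real_inter_le (T := cell a t) measurableSet_Ico
    (volume_cell_ne_top t)).trans
    (measureReal_mono hsub (measure_ne_top_of_subset Set.sdiff_subset (volume_cell_ne_top t)))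
  rw [measureReal_sdiff hIt hI (volume_cell_ne_top t), volume_real_cell ha] at this
  unfold cellLengths
  linarith

lemma _root_.IsAllocOn.cakeval_eq_value {f : Fin n → ℝ → ℝ} {F : Fin n → Fin m → ℝ}
    {A : Fin n → Set ℝ} (hA : IsAllocOn C A) (ha : IsPartitionPts m a) (hconst : ConstOnCells f a F)
    (hC : C ⊆ Set.Icc 0 1) (i : Fin n) : cakeval (f i) (A i) = value F (cellLengths a A) i :=
  cakeval_eq_sum ha (hconst i) (FinUnionIcc.measurableSet (hA.2.1 i)) ((hA.1 i).trans hC)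

theorem weaklyMNWOn_iff {f : Fin (n + 1) → ℝ → ℝ} {F : Fin (n + 1) → Fin m → ℝ}
    {A : Fin (n + 1) → Set ℝ} (hA : IsAllocOn C A) (ha : IsPartitionPts m a)
    (hconst : ConstOnCells f a F) (hC : C ⊆ Set.Icc 0 1) :
    WeaklyMNWOn C f a F A ↔ IsWeaklyMNW 0 F (cellLengths a A) := by
  have hpos : ∀ i s, 0 < volume (A i ∩ cell a s) ↔ 0 < cellLengths a A i s := fun i s ↦ by
    rw [cellLengths, measureReal_def, ENNReal.toReal_pos_iff, and_iff_left
      (measure_ne_top_of_subset Set.inter_subset_right (volume_cell_ne_top s)).lt_top]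
  simp only [WeaklyMNWOn, IsWeaklyMNW, hA, true_and, hA.cakeval_eq_value ha hconst hC, hpos]

theorem exists_isAllocOn_cellLengths_eq (ha : IsPartitionPts m a) {Y : Fin n → Fin m → ℝ}
    (hY : 0 ≤ Y) (hcap : ∀ s, ∑ i, Y i s ≤ a s.succ - a s.castSucc) :
    ∃ B : Fin n → Set ℝ, IsAllocOn (Set.Icc 0 1) B ∧ cellLengths a B = Y := by
  obtain ⟨h0, h1, hmono⟩ := ha
  refine ⟨fun i ↦ ⋃ s, stackPiece a Y i s, ⟨fun i ↦ Set.iUnion_subset fun s ↦ ?_,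
    fun i ↦ ⟨m, stackLo a Y i, fun s ↦ stackLo a Y i s + Y i s, rfl⟩, fun i j hij ↦ ?_⟩,
    funext₂ (volume_real_iUnion_stackPiece_inter_cell hmono hY hcap)⟩
  · rw [← h0, ← h1]
    exact (stackPiece_subset hY hcap i s).trans
      (Set.Icc_subset_Icc (hmono (Fin.zero_le _)) (hmono (Fin.le_last _)))
  · change volume ((⋃ s, stackPiece a Y i s) ∩ ⋃ s, stackPiece a Y j s) = 0
    rw [Set.iUnion_inter, ← nonpos_iff_eq_zero]
    refine (measure_iUnion_le _).trans (le_of_eq (ENNReal.tsum_eq_zero.2 fun s ↦ ?_))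
    rw [Set.inter_iUnion]
    exact measure_iUnion_null fun s' ↦
      volume_stackPiece_inter_stackPiece hmono hY hcap fun h ↦ hij (Prod.ext_iff.1 h).1

end Allocations

end CakeCutting

open CakeCutting

/-- Lemma B.2 (strict resource monotonicity for weakly MNW allocations): if `A` is a
weakly MNW allocation on `[0,1] − I`, where `I` is a positive-measure subset of a
single cell `X_t` on which `f_1` is strictly positive, and agent 1 (index `0`)
deserves `I`, i.e. `f_1(I)/v_1(A_1) ≥ f_j(I)/v_j(A_j)` for all agents `j`, then
there is a weakly MNW allocation `A⁺` on `[0,1]` that is strictly better for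
agent 1 and weakly better for every other agent. -/
theorem weakly_mnw_strict_resource_monotonicity (n m : ℕ) (f : Fin (n + 1) → ℝ → ℝ)
    (hf : ∀ i, ValidDensity (f i))
    (a : Fin (m + 1) → ℝ) (F : Fin (n + 1) → Fin m → ℝ)
    (hpart : IsPartitionPts m a) (hconst : ConstOnCells f a F)
    (t : Fin m) (I : Set ℝ) (hImeas : MeasurableSet I) (hIsub : I ⊆ cell a t)
    (hIpos : 0 < volume I) (hf1pos : 0 < F 0 t)
    (A : Fin (n + 1) → Set ℝ)
    (hA : WeaklyMNWOn (Set.Icc 0 1 \ I) f a F A)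
    (hdeserve : ∀ j : Fin (n + 1),
      F j t / cakeval (f j) (A j) ≤ F 0 t / cakeval (f 0) (A 0)) :
    ∃ Aplus : Fin (n + 1) → Set ℝ, WeaklyMNWOn (Set.Icc 0 1) f a F Aplus ∧
      cakeval (f 0) (A 0) < cakeval (f 0) (Aplus 0) ∧
      ∀ i : Fin (n + 1), i ≠ 0 → cakeval (f i) (A i) ≤ cakeval (f i) (Aplus i) := by
  have hAC : IsAllocOn (Set.Icc 0 1 \ I) A := hA.1
  rw [weaklyMNWOn_iff hAC hpart hconst sdiff_subset] at hA
  simp only [hAC.cakeval_eq_value hpart hconst sdiff_subset] at hdeserve ⊢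
  have hI : 0 < volume.real I :=
    ENNReal.toReal_pos hIpos.ne' (measure_ne_top_of_subset hIsub (volume_cell_ne_top t))
  have hF : ∀ j s, 0 < a s.succ - a s.castSucc → 0 ≤ F j s := fun j s hs ↦
    hconst j s (a s.castSucc) ⟨le_rfl, by linarith⟩ ▸ (hf j).2.1 _
  have hroom : ∑ i, cellLengths a A i t < a t.succ - a t.castSucc := by
    linarith [hAC.sum_cellLengths_add_le hpart.2.2 hImeas hIsub]
  obtain ⟨Y, hY, hYcap, hYmnw, hlt, hle⟩ := exists_isWeaklyMNW_improvement
    (fun i s ↦ measureReal_nonneg) (hAC.sum_cellLengths_le hpart.2.2) hroom hF hA hf1pos hdeserve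
  obtain ⟨B, hB, rfl⟩ := exists_isAllocOn_cellLengths_eq hpart hY hYcap
  refine ⟨B, (weaklyMNWOn_iff hB hpart hconst subset_rfl).2 hYmnw, ?_, fun i _ ↦ ?_⟩ <;>
    rw [hB.cakeval_eq_value hpart hconst subset_rfl]
  exacts [hlt, hle i]
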